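/- arXiv:2311.06150 — 10 statements merged into one kernel-verified Lean document; each statement's English description precedes it below -/
import Mathlib

section
/- Let A = {a_i}_{i∈ℤ} ⊂ ℝ be a strictly increasing doubly infinite sequence such that d(a_{i-1}, a_i) ≤ d(a_i, a_{i+1}) for all i ∈ ℤ and d(a_{j-1}, a_j) < d(a_j, a_{j+1}) for at least one j ∈ ℤ. Then the shift φ : a_i ↦ a_{i-1} is a non-expansive bijection of A onto itself which is not an isometry; hence (A, d) with the Euclidean metric is not plastic. -/
def NonexpOn (φ : ℝ → ℝ) (A : Set ℝ) : Prop :=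
  ∀ x ∈ A, ∀ y ∈ A, dist (φ x) (φ y) ≤ dist x y

def IsomOn (φ : ℝ → ℝ) (A : Set ℝ) : Prop :=
  ∀ x ∈ A, ∀ y ∈ A, dist (φ x) (φ y) = dist x y

def Plastic (A : Set ℝ) : Prop :=
  ∀ φ : ℝ → ℝ, Set.BijOn φ A A → NonexpOn φ A → IsomOn φ A

theorem increasing_gaps_sequence_not_plastic (a : ℤ → ℝ) (ha : StrictMono a)
    (hle : ∀ i : ℤ, a i - a (i - 1) ≤ a (i + 1) - a i)
    (hlt : ∃ j : ℤ, a j - a (j - 1) < a (j + 1) - a j)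
    (φ : ℝ → ℝ) (hφ : ∀ i : ℤ, φ (a i) = a (i - 1)) :
    Set.BijOn φ (Set.range a) (Set.range a) ∧
    NonexpOn φ (Set.range a) ∧
    ¬ IsomOn φ (Set.range a) ∧
    ¬ Plastic (Set.range a) := by
  -- the gap function is monotone
  have hg : Monotone (fun i : ℤ => a (i + 1) - a i) := by
    apply monotone_int_of_le_succ
    intro i
    have := hle (i + 1)
    simpa using this
  have key : ∀ i j : ℤ, |a (i - 1) - a (j - 1)| ≤ |a i - a j| := by
    have base : ∀ i j : ℤ, i ≤ j → |a (i - 1) - a (j - 1)| ≤ |a i - a j| := by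
      intro i j hij
      have h1 : a (i - 1) ≤ a (j - 1) := ha.monotone (by omega)
      have h2 : a i ≤ a j := ha.monotone hij
      rw [abs_sub_comm (a (i-1)), abs_sub_comm (a i),
        abs_of_nonneg (by linarith), abs_of_nonneg (by linarith)]
      have := hg (show i - 1 ≤ j - 1 by omega)
      simp only at this
      have e1 : i - 1 + 1 = i := by omega
      have e2 : j - 1 + 1 = j := by omega
      rw [e1, e2] at this
      linarith
    intro i j
    rcases le_total i j with h | h
    · exact base i j h
    · rw [abs_sub_comm (a (i-1)), abs_sub_comm (a i)]
      exact base j i h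
  have hbij : Set.BijOn φ (Set.range a) (Set.range a) := by
    refine ⟨?_, ?_, ?_⟩
    · rintro x ⟨i, rfl⟩
      exact ⟨i - 1, (hφ i).symm⟩
    · rintro x ⟨i, rfl⟩ y ⟨j, rfl⟩ h
      rw [hφ i, hφ j] at h
      have : i - 1 = j - 1 := ha.injective h
      have : i = j := by omega
      rw [this]
    · rintro x ⟨i, rfl⟩
      exact ⟨a (i + 1), ⟨i + 1, rfl⟩, by rw [hφ (i+1)]; congr 1; omega⟩
  have hnon : NonexpOn φ (Set.range a) := by
    rintro x ⟨i, rfl⟩ y ⟨j, rfl⟩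
    rw [hφ i, hφ j, Real.dist_eq, Real.dist_eq]
    exact key i j
  have hniso : ¬ IsomOn φ (Set.range a) := by
    intro hiso
    obtain ⟨j, hj⟩ := hlt
    have := hiso (a j) ⟨j, rfl⟩ (a (j + 1)) ⟨j + 1, rfl⟩
    rw [hφ j, hφ (j + 1), Real.dist_eq, Real.dist_eq] at this
    have e : j + 1 - 1 = j := by omega
    rw [e] at this
    have h1 : a (j - 1) ≤ a j := ha.monotone (by omega)
    have h2 : a j ≤ a (j + 1) := ha.monotone (by omega)
    rw [abs_of_nonpos (by linarith), abs_of_nonpos (by linarith)] at this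
    linarith
  exact ⟨hbij, hnon, hniso, fun hp => hniso (hp φ hbij hnon)⟩
end

section
/- Let A ⊂ ℝ be a set without accumulation points which is bounded below and unbounded above, let a be the minimal element of A, and let φ : A → A be a bijective non-expansive map. Then φ(a) = a. -/
theorem min_is_fixed (A : Set ℝ) (hacc : ∀ x : ℝ, ¬ AccPt x (Filter.principal A))
    (hbdd : BddBelow A) (hunb : ¬ BddAbove A)
    (a : ℝ) (ha : IsLeast A a)
    (φ : ℝ → ℝ) (hbij : Set.BijOn φ A A) (hne : NonexpOn φ A) :
    φ a = a := by
  by_contra hfa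
  have haA := ha.1
  obtain ⟨c, hcA, hc⟩ := hbij.surjOn haA
  have hca : a < c := lt_of_le_of_ne (ha.2 hcA) (by rintro rfl; exact hfa hc)
  have hδpos : (0:ℝ) < c - a := sub_pos.2 hca
  -- bounded pieces of A are finite
  have hfin : ∀ t : ℝ, (A ∩ Set.Icc a t).Finite := by
    intro t
    by_contra h
    obtain ⟨x, -, hx⟩ := Set.Infinite.exists_accPt_of_subset_isCompact h
      isCompact_Icc Set.inter_subset_right
    exact hacc x (hx.mono (Filter.principal_mono.2 Set.inter_subset_left))
  -- key bound: φ x - a ≤ |x - c|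
  have hkey : ∀ x ∈ A, φ x - a ≤ |x - c| := by
    intro x hx
    have h1 : dist (φ x) (φ c) ≤ dist x c := hne x hx c hcA
    have h2 : a ≤ φ x := ha.2 (hbij.mapsTo hx)
    rw [hc, Real.dist_eq, Real.dist_eq] at h1
    calc φ x - a ≤ |φ x - a| := le_abs_self _
      _ ≤ |x - c| := h1
  -- φ maps F = A ∩ [a,c] into itself
  set F := A ∩ Set.Icc a c with hF
  have hmaps : Set.MapsTo φ F F := by
    rintro x ⟨hxA, hxa, hxc⟩
    refine ⟨hbij.mapsTo hxA, ha.2 (hbij.mapsTo hxA), ?_⟩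
    have := hkey x hxA
    rw [abs_of_nonpos (by linarith)] at this
    linarith
  have hbijF : Set.BijOn φ F F :=
    ((hfin c).injOn_iff_bijOn_of_mapsTo hmaps).1 (hbij.injOn.mono Set.inter_subset_left)
  -- φ x ≤ x - (c - a) for x ∈ A with c < x
  have hdec : ∀ x ∈ A, c < x → φ x ≤ x - (c - a) := by
    intro x hxA hcx
    have := hkey x hxA
    rw [abs_of_nonneg (by linarith)] at this
    linarith
  -- A ∩ (c, ∞) is nonempty and has a least element m
  obtain ⟨z, hzA, hz⟩ := not_bddAbove_iff.1 hunb c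
  have hSfin : (A ∩ Set.Ioc c z).Finite :=
    (hfin z).subset (Set.inter_subset_inter_right A
      (fun y hy => ⟨le_trans hca.le hy.1.le, hy.2⟩))
  obtain ⟨m, hmS, hmin⟩ := Set.exists_min_image _ id hSfin ⟨z, hzA, hz, le_rfl⟩
  have hminA : ∀ y ∈ A, c < y → m ≤ y := by
    intro y hyA hcy
    by_cases hyz : y ≤ z
    · exact hmin y ⟨hyA, hcy, hyz⟩
    · exact le_trans (hmin z ⟨hzA, hz, le_rfl⟩) (le_of_not_ge hyz)
  have hmA : m ∈ A := hmS.1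
  have hcm : c < m := hmS.2.1
  -- φ m must be > c
  have hφmA : φ m ∈ A := hbij.mapsTo hmA
  have hφmc : c < φ m := by
    by_contra h
    push_neg at h
    have hφmF : φ m ∈ F := ⟨hφmA, ha.2 hφmA, h⟩
    obtain ⟨u, huF, hu⟩ := hbijF.surjOn hφmF
    have : u = m := hbij.injOn huF.1 hmA hu
    have : u ≤ c := huF.2.2
    linarith
  -- contradiction
  have h1 := hminA (φ m) hφmA hφmc
  have h2 := hdec m hmA hcm
  linarith
end

section
/- Let A ⊂ ℝ be an unbounded set without accumulation points which has a minimal element (or a maximal element). Then every bijective non-expansive map φ : A → A is the identity map; in particular, (A, d) is plastic. -/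
/-- A bounded subset of a set with no accumulation points is finite. -/
lemma finite_of_bounded_subset (A : Set ℝ) (hacc : ∀ x : ℝ, ¬ AccPt x (Filter.principal A))
    (B : Set ℝ) (hBA : B ⊆ A) (hB : Bornology.IsBounded B) : B.Finite := by
  by_contra hinf
  have hinf : B.Infinite := hinf
  have hK : IsCompact (closure B) :=
    Metric.isCompact_of_isClosed_isBounded isClosed_closure hB.closure
  obtain ⟨x, -, hx⟩ := hinf.exists_accPt_of_subset_isCompact hK subset_closure
  exact hacc x (hx.mono (Filter.principal_mono.2 hBA))

/-- A nonempty bounded-below subset of a set with no accumulation points has a least element. -/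
lemma exists_least (A : Set ℝ) (hacc : ∀ x : ℝ, ¬ AccPt x (Filter.principal A))
    (B : Set ℝ) (hBA : B ⊆ A) (hne : B.Nonempty) (hbdd : BddBelow B) :
    ∃ p, IsLeast B p := by
  obtain ⟨b, hb⟩ := hne
  have hC : (B ∩ Set.Iic b).Finite := by
    apply finite_of_bounded_subset A hacc _ (fun x hx => hBA hx.1)
    rcases hbdd with ⟨c, hc⟩
    exact (Metric.isBounded_Icc c b).subset fun x hx => ⟨hc hx.1, hx.2⟩
  have hCne : (B ∩ Set.Iic b).Nonempty := ⟨b, hb, le_refl b⟩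
  have hpC : sInf (B ∩ Set.Iic b) ∈ B ∩ Set.Iic b := hCne.csInf_mem hC
  refine ⟨sInf (B ∩ Set.Iic b), hpC.1, fun x hx => ?_⟩
  rcases le_or_gt x b with h | h
  · exact csInf_le hC.bddBelow ⟨hx, h⟩
  · exact le_trans hpC.2 h.le

/-- Key lemma: the case where `A` has a least element. -/
lemma key_least (A : Set ℝ)
    (hunb : ¬ Bornology.IsBounded A)
    (hacc : ∀ x : ℝ, ¬ AccPt x (Filter.principal A))
    (a : ℝ) (ha : IsLeast A a)
    (φ : ℝ → ℝ) (hbij : Set.BijOn φ A A) (hne : NonexpOn φ A) :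
    ∀ x ∈ A, φ x = x := by
  by_contra hcon
  push_neg at hcon
  obtain ⟨x₀, hx₀A, hx₀⟩ := hcon
  have hba : ¬ BddAbove A := fun h =>
    hunb (isBounded_iff_bddBelow_bddAbove.2 ⟨⟨a, ha.2⟩, h⟩)
  -- p : least non-fixed point of φ
  obtain ⟨p, hpB, hpmin⟩ := exists_least A hacc {x ∈ A | φ x ≠ x} (fun x hx => hx.1)
    ⟨x₀, hx₀A, hx₀⟩ ⟨a, fun x hx => ha.2 hx.1⟩
  obtain ⟨hpA, hpne⟩ := hpB
  -- all points of A below p are fixed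
  have hfix : ∀ x ∈ A, x < p → φ x = x := by
    intro x hx hlt
    by_contra h
    exact absurd (hpmin ⟨hx, h⟩) (not_le.2 hlt)
  -- points of A at least p map to points at least p
  have hgep : ∀ x ∈ A, p ≤ x → p ≤ φ x := by
    intro x hx hpx
    by_contra h
    push_neg at h
    have hφxA : φ x ∈ A := hbij.1 hx
    have h1 : φ (φ x) = φ x := hfix _ hφxA h
    have h2 : φ x = x := hbij.2.1 hφxA hx h1
    linarith
  have hφp : p < φ p := lt_of_le_of_ne (hgep p hpA le_rfl) (Ne.symm hpne)
  -- r : the preimage of p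
  obtain ⟨r, hrA, hr⟩ := hbij.2.2 hpA
  have hpr : p < r := by
    rcases lt_trichotomy r p with h | h | h
    · exact absurd (hfix r hrA h ▸ hr) (ne_of_lt h)
    · exact absurd (h ▸ hr) hpne
    · exact h
  -- φ maps S = A ∩ [p, r] into itself
  set S : Set ℝ := A ∩ Set.Icc p r with hSdef
  have hmaps : Set.MapsTo φ S S := by
    intro x hx
    have hxA : x ∈ A := hx.1
    have hxp : p ≤ x := hx.2.1
    have hxr : x ≤ r := hx.2.2
    refine ⟨hbij.1 hxA, hgep x hxA hxp, ?_⟩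
    have hd := hne x hxA r hrA
    rw [Real.dist_eq, Real.dist_eq, hr] at hd
    have h1 : φ x - p ≤ |φ x - p| := le_abs_self _
    have h2 : |x - r| = r - x := by rw [abs_sub_comm]; exact abs_of_nonneg (by linarith)
    linarith [hd, h1, h2.symm ▸ hd]
  have hSfin : S.Finite := finite_of_bounded_subset A hacc S Set.inter_subset_left
    ((Metric.isBounded_Icc p r).subset Set.inter_subset_right)
  have hSbij : Set.BijOn φ S S :=
    (hSfin.injOn_iff_bijOn_of_mapsTo hmaps).1 (hbij.2.1.mono Set.inter_subset_left)
  -- s : least element of A above r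
  obtain ⟨t, htA, htr⟩ := by
    rw [not_bddAbove_iff] at hba; exact hba r
  obtain ⟨s, hsB, hsmin⟩ := exists_least A hacc (A ∩ Set.Ioi r) Set.inter_subset_left
    ⟨t, htA, htr⟩ ⟨r, fun x hx => le_of_lt hx.2⟩
  obtain ⟨hsA, hsr⟩ := hsB
  have hsr : r < s := hsr
  -- φ s > r
  have hφsr : r < φ s := by
    by_contra h
    push_neg at h
    have hφsA : φ s ∈ A := hbij.1 hsA
    rcases lt_or_ge (φ s) p with h1 | h1
    · have h2 : φ (φ s) = φ s := hfix _ hφsA h1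
      have h3 : φ s = s := hbij.2.1 hφsA hsA h2
      linarith
    · have hφsS : φ s ∈ S := ⟨hφsA, h1, h⟩
      obtain ⟨y, hyS, hy⟩ := hSbij.2.2 hφsS
      have : y = s := hbij.2.1 (hyS.1) hsA hy
      have : s ≤ r := this ▸ hyS.2.2
      linarith
  -- hence φ s ≥ s, contradiction with nonexpansiveness on (s, r)
  have hφss : s ≤ φ s := hsmin ⟨hbij.1 hsA, hφsr⟩
  have hd := hne s hsA r hrA
  rw [Real.dist_eq, Real.dist_eq, hr] at hd
  have h1 : φ s - p ≤ |φ s - p| := le_abs_self _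
  have h2 : |s - r| = s - r := abs_of_nonneg (by linarith)
  linarith

theorem unbounded_no_accpt_with_extremum_plastic (A : Set ℝ)
    (hunb : ¬ Bornology.IsBounded A)
    (hacc : ∀ x : ℝ, ¬ AccPt x (Filter.principal A))
    (hext : (∃ a, IsLeast A a) ∨ (∃ a, IsGreatest A a)) :
    (∀ φ : ℝ → ℝ, Set.BijOn φ A A → NonexpOn φ A → ∀ x ∈ A, φ x = x) ∧
    Plastic A := by
  have main : ∀ φ : ℝ → ℝ, Set.BijOn φ A A → NonexpOn φ A → ∀ x ∈ A, φ x = x := by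
    rcases hext with ⟨a, ha⟩ | ⟨a, ha⟩
    · exact fun φ hbij hne => key_least A hunb hacc a ha φ hbij hne
    · -- reduce to the least case via negation
      intro φ hbij hne x hx
      set A' : Set ℝ := -A with hA'def
      have hmemA' : ∀ y : ℝ, y ∈ A' ↔ -y ∈ A := fun y => Set.mem_neg
      set ψ : ℝ → ℝ := fun y => -φ (-y) with hψdef
      have hunb' : ¬ Bornology.IsBounded A' := by
        intro h
        have := h.neg
        rw [hA'def, neg_neg] at this
        exact hunb this
      have hacc' : ∀ y : ℝ, ¬ AccPt y (Filter.principal A') := by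
        intro y hy
        apply hacc (-y)
        rw [accPt_iff_nhds] at hy ⊢
        intro U hU
        have hU' : Neg.neg ⁻¹' U ∈ nhds y := (continuous_neg.tendsto y) hU
        obtain ⟨z, ⟨hzU, hzA'⟩, hz⟩ := hy _ hU'
        exact ⟨-z, ⟨hzU, (hmemA' z).1 hzA'⟩, by intro h; apply hz; linarith [neg_injective h]⟩
      have ha' : IsLeast A' (-a) := by
        constructor
        · exact (hmemA' (-a)).2 (by simpa using ha.1)
        · intro y hy
          have := ha.2 ((hmemA' y).1 hy)
          linarith
      have hbij' : Set.BijOn ψ A' A' := by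
        constructor
        · intro y hy
          exact (hmemA' _).2 (by simpa [hψdef] using hbij.1 ((hmemA' y).1 hy))
        constructor
        · intro y hy z hz h
          have : φ (-y) = φ (-z) := by
            have : -φ (-y) = -φ (-z) := h
            linarith
          have := hbij.2.1 ((hmemA' y).1 hy) ((hmemA' z).1 hz) this
          linarith
        · intro y hy
          obtain ⟨z, hz, hzeq⟩ := hbij.2.2 ((hmemA' y).1 hy)
          exact ⟨-z, (hmemA' (-z)).2 (by simpa using hz), by simp [hψdef, hzeq]⟩
      have hne' : NonexpOn ψ A' := by
        intro y hy z hz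
        calc dist (ψ y) (ψ z) = dist (φ (-y)) (φ (-z)) := dist_neg_neg _ _
          _ ≤ dist (-y) (-z) := hne (-y) ((hmemA' y).1 hy) (-z) ((hmemA' z).1 hz)
          _ = dist y z := dist_neg_neg _ _
      have := key_least A' hunb' hacc' (-a) ha' ψ hbij' hne' (-x) ((hmemA' (-x)).2 (by simpa using hx))
      have : -φ x = -x := by simpa [hψdef] using this
      linarith
  refine ⟨main, fun φ hbij hne x hx y hy => ?_⟩
  rw [main φ hbij hne x hx, main φ hbij hne y hy]
end

section
/- Let A = ℕ ∪ Q ⊂ ℝ, where Q = {2k : k ∈ ℤ, k ≤ 0}. Define φ : A → A by φ(a) = a + 6 if a ≤ -4 and φ(a) = a + 3 otherwise. Then φ is a non-expansive bijection of A onto itself that does not preserve the betweenness relation: -4 < -2 < 0 but φ(-2) < φ(-4) < φ(0). -/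
theorem example_not_betweenness_preserving (φ : ℝ → ℝ)
    (A : Set ℝ)
    (hA : A = {x : ℝ | ∃ n : ℕ, 1 ≤ n ∧ x = n} ∪ {x : ℝ | ∃ k : ℤ, k ≤ 0 ∧ x = 2 * k})
    (hφ : ∀ x : ℝ, φ x = if x ≤ -4 then x + 6 else x + 3) :
    Set.BijOn φ A A ∧ NonexpOn φ A ∧
    ((-4 : ℝ) < -2 ∧ (-2 : ℝ) < 0 ∧ φ (-2) < φ (-4) ∧ φ (-4) < φ 0) := by
  have hmem : ∀ x ∈ A, (∃ n : ℕ, 1 ≤ n ∧ x = n) ∨ (∃ k : ℤ, k ≤ 0 ∧ x = 2 * k) := by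
    intro x hx; rw [hA] at hx; exact hx
  have hmemN : ∀ n : ℕ, 1 ≤ n → (n : ℝ) ∈ A := by
    intro n hn; rw [hA]; left; exact ⟨n, hn, rfl⟩
  have hmemZ : ∀ k : ℤ, k ≤ 0 → (2 * k : ℝ) ∈ A := by
    intro k hk; rw [hA]; right; exact ⟨k, hk, by push_cast; ring⟩
  -- classification of elements
  have L1 : ∀ x ∈ A, x ≤ -4 ∨ x = -2 ∨ x = 0 ∨ (1 : ℝ) ≤ x := by
    intro x hx
    rcases hmem x hx with ⟨n, hn, rfl⟩ | ⟨k, hk, rfl⟩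
    · right; right; right; exact_mod_cast hn
    · by_cases h2 : k ≤ -2
      · left
        have : (k : ℝ) ≤ -2 := by exact_mod_cast h2
        linarith
      · have hk1 : k = -1 ∨ k = 0 := by omega
        rcases hk1 with rfl | rfl
        · right; left; norm_num
        · right; right; left; norm_num
  have L2 : ∀ x ∈ A, x ≤ -4 → ∃ k : ℤ, k ≤ -2 ∧ x = 2 * k := by
    intro x hx hx4
    rcases hmem x hx with ⟨n, hn, rfl⟩ | ⟨k, hk, rfl⟩
    · exfalso
      have : (1 : ℝ) ≤ n := by exact_mod_cast hn
      linarith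
    · refine ⟨k, ?_, rfl⟩
      have : (2 : ℝ) * k ≤ -4 := hx4
      have : (k : ℝ) ≤ -2 := by linarith
      exact_mod_cast this
  have hge : ∀ y ∈ A, ¬ y ≤ -4 → -2 ≤ y := by
    intro y hy h
    rcases L1 y hy with h' | h' | h' | h' <;> first | exact absurd h' h | linarith
  refine ⟨⟨?_, ?_, ?_⟩, ?_, ?_⟩
  · -- MapsTo
    intro a ha
    rcases hmem a ha with ⟨n, hn, rfl⟩ | ⟨k, hk, rfl⟩
    · have h4 : ¬ ((n : ℝ) ≤ -4) := by
        have : (1 : ℝ) ≤ n := by exact_mod_cast hn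
        linarith
      rw [hφ, if_neg h4]
      have : ((n : ℝ) + 3) = ((n + 3 : ℕ) : ℝ) := by push_cast; ring
      rw [this]
      exact hmemN (n + 3) (by omega)
    · by_cases h4 : (2 * (k : ℝ)) ≤ -4
      · rw [hφ, if_pos h4]
        have hk2 : k ≤ -2 := by
          have : (k : ℝ) ≤ -2 := by linarith
          exact_mod_cast this
        by_cases h3 : k + 3 ≤ 0
        · have : (2 : ℝ) * k + 6 = 2 * ((k + 3 : ℤ) : ℝ) := by push_cast; ring
          rw [this]
          exact hmemZ (k + 3) h3
        · have hkm2 : k = -2 := by omega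
          subst hkm2
          have : (2 : ℝ) * (-2 : ℤ) + 6 = ((2 : ℕ) : ℝ) := by push_cast; norm_num
          rw [this]
          exact hmemN 2 (by omega)
      · rw [hφ, if_neg h4]
        have hk1 : k = -1 ∨ k = 0 := by
          have : (-2 : ℝ) < k := by linarith
          have : (-2 : ℤ) < k := by exact_mod_cast this
          omega
        rcases hk1 with rfl | rfl
        · have : (2 : ℝ) * (-1 : ℤ) + 3 = ((1 : ℕ) : ℝ) := by push_cast; norm_num
          rw [this]; exact hmemN 1 le_rfl
        · have : (2 : ℝ) * (0 : ℤ) + 3 = ((3 : ℕ) : ℝ) := by push_cast; norm_num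
          rw [this]; exact hmemN 3 (by omega)
  · -- InjOn
    intro x hx y hy hxy
    rw [hφ x, hφ y] at hxy
    split_ifs at hxy with h1 h2 h2
    · linarith
    · exfalso
      obtain ⟨k, hk2, rfl⟩ := L2 x hx h1
      rcases L1 y hy with h' | h' | h' | h'
      · exact h2 h'
      · have : (k : ℝ) ≤ -2 := by exact_mod_cast hk2
        have hy5 : (2 : ℝ) * k = -5 := by linarith [hxy]
        have : (2 * k : ℤ) = -5 := by exact_mod_cast (by push_cast; linarith : ((2 * k : ℤ) : ℝ) = -5)
        omega
      · have : (k : ℝ) ≤ -2 := by exact_mod_cast hk2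
        linarith
      · have : (k : ℝ) ≤ -2 := by exact_mod_cast hk2
        linarith
    · exfalso
      obtain ⟨k, hk2, rfl⟩ := L2 y hy h2
      rcases L1 x hx with h' | h' | h' | h'
      · exact h1 h'
      · have : (k : ℝ) ≤ -2 := by exact_mod_cast hk2
        have : (2 * k : ℤ) = -5 := by exact_mod_cast (by push_cast; linarith : ((2 * k : ℤ) : ℝ) = -5)
        omega
      · have : (k : ℝ) ≤ -2 := by exact_mod_cast hk2
        linarith
      · have : (k : ℝ) ≤ -2 := by exact_mod_cast hk2
        linarith
    · linarith
  · -- SurjOn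
    intro b hb
    rcases hmem b hb with ⟨n, hn, rfl⟩ | ⟨k, hk, rfl⟩
    · by_cases h4 : 4 ≤ n
      · refine ⟨((n - 3 : ℕ) : ℝ), hmemN (n - 3) (by omega), ?_⟩
        have hne : ¬ (((n - 3 : ℕ) : ℝ) ≤ -4) := by
          have : (0 : ℝ) ≤ ((n - 3 : ℕ) : ℝ) := Nat.cast_nonneg _
          linarith
        rw [hφ, if_neg hne]
        push_cast [Nat.cast_sub (by omega : 3 ≤ n)]
        ring
      · have : n = 1 ∨ n = 2 ∨ n = 3 := by omega
        rcases this with rfl | rfl | rfl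
        · refine ⟨(2 * (-1 : ℤ) : ℝ), hmemZ (-1) (by omega), ?_⟩
          rw [hφ]; norm_num
        · refine ⟨(2 * (-2 : ℤ) : ℝ), hmemZ (-2) (by omega), ?_⟩
          rw [hφ]; norm_num
        · refine ⟨(2 * (0 : ℤ) : ℝ), hmemZ 0 le_rfl, ?_⟩
          rw [hφ]; norm_num
    · refine ⟨(2 * ((k - 3 : ℤ) : ℝ)), hmemZ (k - 3) (by omega), ?_⟩
      have hkR : (k : ℝ) ≤ 0 := by exact_mod_cast hk
      have hle : (2 : ℝ) * ((k - 3 : ℤ) : ℝ) ≤ -4 := by push_cast; linarith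
      rw [hφ, if_pos hle]; push_cast; ring
  · -- NonexpOn
    intro x hx y hy
    rw [hφ x, hφ y, Real.dist_eq, Real.dist_eq]
    split_ifs with h1 h2 h2
    · simp
    · have hy2 : -2 ≤ y := hge y hy h2
      have habs : |x - y| = y - x := by
        rw [abs_sub_comm, abs_of_nonneg (by linarith)]
      rw [habs, abs_le]
      constructor <;> linarith
    · have hx2 : -2 ≤ x := hge x hx h1
      have habs : |x - y| = x - y := abs_of_nonneg (by linarith)
      rw [habs, abs_le]
      constructor <;> linarith
    · simp
  · refine ⟨by norm_num, by norm_num, ?_, ?_⟩ <;> rw [hφ, hφ] <;> norm_num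
end

section
/- The set of integers ℤ with the Euclidean metric is plastic: every non-expansive bijection φ : ℤ → ℤ is an isometry. -/
/-!
Non-expansiveness and injectivity force every step `φ (i + 1) - φ i` to be `1` or `-1`. Two
consecutive steps of opposite signs would give `φ (i + 2) = φ i`, so all steps are equal and `φ`
is `n ↦ φ 0 ± n`, an isometry.
-/

theorem Int.eq_add_zsmul_of_sub_eq {G : Type*} [AddCommGroup G] {f : ℤ → G} {c : G}
    (h : ∀ i, f (i + 1) - f i = c) (n : ℤ) : f n = f 0 + n • c := by
  induction n using Int.induction_on with
  | zero => simp
  | succ k ih => linear_combination (norm := module) ih + h k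
  | pred k ih =>
    have hk := h (-k - 1)
    rw [sub_add_cancel] at hk
    linear_combination (norm := module) ih - hk

section

variable {f : ℤ → ℤ}

theorem Int.sub_eq_one_or_neg_one_of_injective (hf : Function.Injective f) {i : ℤ}
    (h : |f (i + 1) - f i| ≤ 1) : f (i + 1) - f i = 1 ∨ f (i + 1) - f i = -1 := by
  have hne : f (i + 1) ≠ f i := hf.ne (by omega)
  rcases abs_le.mp h with ⟨_, _⟩
  omega

theorem Int.sub_succ_eq_sub_of_injective (hf : Function.Injective f)
    (hstep : ∀ i, f (i + 1) - f i = 1 ∨ f (i + 1) - f i = -1) (i : ℤ) :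
    f (i + 1 + 1) - f (i + 1) = f (i + 1) - f i := by
  have hne : f (i + 1 + 1) ≠ f i := hf.ne (by omega)
  rcases hstep i with _ | _ <;> rcases hstep (i + 1) with _ | _ <;> omega

theorem Int.eq_add_mul_of_injective (hf : Function.Injective f)
    (hstep : ∀ i, |f (i + 1) - f i| ≤ 1) :
    ∃ c : ℤ, (c = 1 ∨ c = -1) ∧ ∀ n, f n = f 0 + c * n := by
  have hunit i := Int.sub_eq_one_or_neg_one_of_injective hf (hstep i)
  have hconst : ∀ i, f (i + 1) - f i = f 1 - f 0 := fun i => by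
    simpa using Int.eq_add_zsmul_of_sub_eq (f := fun j => f (j + 1) - f j) (c := 0)
      (fun j => sub_eq_zero.mpr (Int.sub_succ_eq_sub_of_injective hf hunit j)) i
  refine ⟨f 1 - f 0, by simpa using hunit 0, fun n => ?_⟩
  rw [Int.eq_add_zsmul_of_sub_eq hconst n, smul_eq_mul, mul_comm]

end

theorem integers_plastic (φ : ℤ → ℤ) (hbij : Function.Bijective φ)
    (hne : ∀ m n : ℤ, dist (φ m) (φ n) ≤ dist m n) :
    ∀ m n : ℤ, dist (φ m) (φ n) = dist m n := by
  have hstep i : |φ (i + 1) - φ i| ≤ 1 := by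
    have h := hne (i + 1) i
    rw [Int.dist_eq', Int.dist_eq', add_sub_cancel_left, abs_one] at h
    exact_mod_cast h
  obtain ⟨c, hc, hφ⟩ := Int.eq_add_mul_of_injective hbij.injective hstep
  intro m n
  rw [Int.dist_eq', Int.dist_eq', hφ m, hφ n, add_sub_add_left_eq_sub, ← mul_sub, abs_mul]
  rcases hc with rfl | rfl <;> simp
end

section
/- The set ℝ \ ℤ with the Euclidean metric is plastic: every non-expansive bijection φ : ℝ \ ℤ → ℝ \ ℤ is an isometry. -/
/-!
Extend `φ` to a `1`-Lipschitz map `ψ : ℝ → ℝ`. Being continuous and injective, `ψ` maps every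
component `(n, n + 1)` of `ℝ ∖ ℤ` onto an open interval lying in a single component. As `φ` is
onto, each component `(m, m + 1)` is the disjoint union of the open images of the components it
contains, so by connectedness it is the image of exactly one of them. A `1`-Lipschitz map sending
`(n, n + 1)` onto an interval of length `1` is `x ↦ ψ n ± (x - n)` on `[n, n + 1]`, and the sign
cannot change at an integer `n + 1`, since then `ψ (n + 1/2) = ψ (n + 3/2)`. Hence `ψ x = ψ 0 ± x`.
-/

open Set Function

theorem IsPreconnected.subset_of_subset_iUnion {X ι : Type*} [TopologicalSpace X] {s : Set X}
    {U : ι → Set X} (hs : IsPreconnected s) (hU : ∀ i, IsOpen (U i))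
    (hdisj : Pairwise (Disjoint on U)) (hsU : s ⊆ ⋃ i, U i) {i : ι} (hi : (s ∩ U i).Nonempty) :
    s ⊆ U i := by
  refine hs.subset_left_of_subset_union (hU i) (isOpen_biUnion fun j _ => hU j)
    (disjoint_iUnion₂_right.2 fun j hj => hdisj (Ne.symm hj)) (fun x hx => ?_) hi
  obtain ⟨j, hj⟩ := mem_iUnion.1 (hsU hx)
  by_cases hji : j = i
  · exact Or.inl (hji ▸ hj)
  · exact Or.inr (mem_biUnion hji hj)

theorem isOpen_image_Ioo_of_injOn {α δ : Type*} [ConditionallyCompleteLinearOrder α]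
    [TopologicalSpace α] [OrderTopology α] [DenselyOrdered α] [LinearOrder δ] [TopologicalSpace δ]
    [OrderClosedTopology δ] {f : α → δ} {a b : α} (hf : ContinuousOn f (Ioo a b))
    (hi : InjOn f (Ioo a b)) : IsOpen (f '' Ioo a b) := by
  refine isOpen_iff_forall_mem_open.2 ?_
  rintro _ ⟨x, hx, rfl⟩
  obtain ⟨x₁, hax₁, hx₁x⟩ := exists_between hx.1
  obtain ⟨x₂, hxx₂, hx₂b⟩ := exists_between hx.2
  have hsub : Icc x₁ x₂ ⊆ Ioo a b := Icc_subset_Ioo hax₁ hx₂b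
  have hx₁₂ : x₁ ≤ x₂ := (hx₁x.trans hxx₂).le
  refine ⟨f '' Ioo x₁ x₂, image_mono (Ioo_subset_Icc_self.trans hsub), ?_, x, ⟨hx₁x, hxx₂⟩, rfl⟩
  rcases (hf.mono hsub).strictMonoOn_of_injOn_Icc' hx₁₂ (hi.mono hsub) with hmono | hanti
  · rw [(hf.mono hsub).image_Ioo_of_strictMonoOn hx₁₂ hmono]
    exact isOpen_Ioo
  · rw [(hf.mono hsub).image_Ioo_of_strictAntiOn hx₁₂ hanti]
    exact isOpen_Ioo

namespace LipschitzWith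

variable {f : ℝ → ℝ} {a b : ℝ}

theorem abs_sub_le (hf : LipschitzWith 1 f) (x y : ℝ) : |f x - f y| ≤ |x - y| := by
  simpa [Real.dist_eq] using hf.dist_le_mul x y

theorem le_abs_sub_of_Ioo_subset_image (hf : LipschitzWith 1 f) {c d : ℝ} (hab : a < b)
    (hcd : b - a ≤ d - c) (himage : Ioo c d ⊆ f '' Ioo a b) : b - a ≤ |f b - f a| := by
  have hcd' : c < d := by linarith
  have hIcc : Icc c d ⊆ f '' Icc a b := by
    rw [← closure_Ioo hcd'.ne]
    exact closure_minimal (himage.trans (image_mono Ioo_subset_Icc_self))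
      (isCompact_Icc.image hf.continuous).isClosed
  obtain ⟨u, hu, hfu⟩ := hIcc (left_mem_Icc.2 hcd'.le)
  obtain ⟨v, hv, hfv⟩ := hIcc (right_mem_Icc.2 hcd'.le)
  have huv : b - a ≤ |v - u| := by
    have := hf.abs_sub_le v u
    rw [hfu, hfv, abs_of_pos (sub_pos.2 hcd')] at this
    linarith
  -- `u` and `v` are at distance at least `b - a` in `[a, b]`, so they are its endpoints
  rcases abs_cases (v - u) with ⟨h, -⟩ | ⟨h, -⟩
  · obtain ⟨rfl, rfl⟩ : u = a ∧ v = b := by constructor <;> linarith [hu.1, hv.2]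
    rw [hfu, hfv, abs_of_pos (sub_pos.2 hcd')]
    exact hcd
  · obtain ⟨rfl, rfl⟩ : u = b ∧ v = a := by constructor <;> linarith [hu.2, hv.1]
    rw [hfu, hfv, abs_sub_comm, abs_of_pos (sub_pos.2 hcd')]
    exact hcd

theorem sub_mul_eq_of_le_abs_sub (hf : LipschitzWith 1 f) (h : b - a ≤ |f b - f a|) {x : ℝ}
    (hx : x ∈ Icc a b) : (f x - f a) * (b - a) = (f b - f a) * (x - a) := by
  have hxa := abs_le.1 <| (hf.abs_sub_le x a).trans_eq (abs_of_nonneg (sub_nonneg.2 hx.1))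
  have hbx := abs_le.1 <| (hf.abs_sub_le b x).trans_eq (abs_of_nonneg (sub_nonneg.2 hx.2))
  -- the bounds on `[a, x]` and `[x, b]` add up to the bound on `[a, b]`, which is attained
  rcases abs_cases (f b - f a) with ⟨habs, -⟩ | ⟨habs, -⟩
  · have hb : f b - f a = b - a := by linarith
    have hx : f x - f a = x - a := by linarith
    rw [hb, hx, mul_comm]
  · have hb : f b - f a = -(b - a) := by linarith
    have hx : f x - f a = -(x - a) := by linarith
    rw [hb, hx]
    ring

end LipschitzWith

def nonIntegers : Set ℝ := {x | ∀ k : ℤ, x ≠ k}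

theorem nonIntegers_eq_iUnion : nonIntegers = ⋃ n : ℤ, Ioo (n : ℝ) (n + 1) := by
  ext x
  simp only [nonIntegers, mem_ofPred_eq, mem_iUnion, mem_Ioo]
  constructor
  · intro hx
    exact ⟨⌊x⌋, (Int.floor_le x).lt_of_ne (hx ⌊x⌋).symm, Int.lt_floor_add_one x⟩
  · rintro ⟨n, hnx, hxn⟩ k rfl
    have : n < k := by exact_mod_cast hnx
    have : k < n + 1 := by exact_mod_cast hxn
    omega

theorem Ioo_subset_nonIntegers (n : ℤ) : Ioo (n : ℝ) (n + 1) ⊆ nonIntegers :=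
  nonIntegers_eq_iUnion ▸ subset_iUnion (fun n : ℤ => Ioo (n : ℝ) (n + 1)) n

section

variable {ψ : ℝ → ℝ}

theorem exists_image_Ioo_eq_Ioo (hψ : Continuous ψ) (hbij : BijOn ψ nonIntegers nonIntegers)
    (n : ℤ) : ∃ m : ℤ, ψ '' Ioo (n : ℝ) (n + 1) = Ioo (m : ℝ) (m + 1) := by
  set U : ℤ → Set ℝ := fun k => ψ '' Ioo (k : ℝ) (k + 1)
  have hU : ∀ k, IsOpen (U k) := fun k =>
    isOpen_image_Ioo_of_injOn hψ.continuousOn (hbij.injOn.mono (Ioo_subset_nonIntegers k))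
  have hUdisj : Pairwise (Disjoint on U) := fun j k hjk => by
    rw [onFun, disjoint_iff_inter_eq_empty, ← hbij.injOn.image_inter
      (Ioo_subset_nonIntegers j) (Ioo_subset_nonIntegers k),
      (pairwise_disjoint_Ioo_intCast ℝ hjk).inter_eq, image_empty]
  have hUcover : nonIntegers ⊆ ⋃ k, U k := by
    rw [← image_iUnion, ← nonIntegers_eq_iUnion, hbij.image_eq]
  have hmid : (n : ℝ) + 1 / 2 ∈ Ioo (n : ℝ) (n + 1) := ⟨by linarith, by linarith⟩
  obtain ⟨m, hm⟩ :=
    mem_iUnion.1 (nonIntegers_eq_iUnion.subset (hbij.mapsTo (Ioo_subset_nonIntegers n hmid)))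
  refine ⟨m, Subset.antisymm ?_ ?_⟩
  · exact (isPreconnected_Ioo.image ψ hψ.continuousOn).subset_of_subset_iUnion
      (fun k => isOpen_Ioo) (pairwise_disjoint_Ioo_intCast ℝ)
      ((hbij.mapsTo.mono_left (Ioo_subset_nonIntegers n)).image_subset.trans
        nonIntegers_eq_iUnion.subset)
      ⟨_, mem_image_of_mem ψ hmid, hm⟩
  · exact isPreconnected_Ioo.subset_of_subset_iUnion hU hUdisj
      ((Ioo_subset_nonIntegers m).trans hUcover) ⟨_, hm, mem_image_of_mem ψ hmid⟩

theorem slope_succ_eq_of_injOn (s : ℤ → ℝ)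
    (haff : ∀ n : ℤ, ∀ x ∈ Icc (n : ℝ) (n + 1), ψ x = ψ n + s n * (x - n))
    (hs : ∀ n, |s n| = 1) (hinj : InjOn ψ nonIntegers) (n : ℤ) : s (n + 1) = s n := by
  rcases abs_eq_abs.1 ((hs (n + 1)).trans (hs n).symm) with h | h
  · exact h
  have h₁ := haff n (n + 1 / 2) ⟨by linarith, by linarith⟩
  have h₂ := haff n (n + 1) ⟨by linarith, le_rfl⟩
  have h₃ := haff (n + 1) (n + 3 / 2) ⟨by push_cast; linarith, by push_cast; linarith⟩
  push_cast at h₃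
  have hx₁ : (n : ℝ) + 1 / 2 ∈ nonIntegers := Ioo_subset_nonIntegers n ⟨by linarith, by linarith⟩
  have hx₂ : (n : ℝ) + 3 / 2 ∈ nonIntegers :=
    Ioo_subset_nonIntegers (n + 1) ⟨by push_cast; linarith, by push_cast; linarith⟩
  -- opposite slopes on `[n, n + 1]` and `[n + 1, n + 2]` make `ψ` symmetric about `n + 1`
  have := hinj hx₁ hx₂ (by rw [h₁, h₃, h₂, h]; ring)
  linarith

theorem eq_add_mul_of_forall_mem_Icc {ε : ℝ}
    (haff : ∀ n : ℤ, ∀ x ∈ Icc (n : ℝ) (n + 1), ψ x = ψ n + ε * (x - n)) (x : ℝ) :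
    ψ x = ψ 0 + ε * x := by
  have hper : Periodic (fun n : ℤ => ψ n - ε * n) 1 := fun n => by
    simp only [Int.cast_add, Int.cast_one]
    rw [haff n (n + 1) ⟨by linarith, le_rfl⟩]
    ring
  have hfloor := hper.int_mul_eq ⌊x⌋
  simp only [Int.cast_id, mul_one, Int.cast_zero, mul_zero, sub_zero] at hfloor
  rw [haff ⌊x⌋ x ⟨Int.floor_le x, (Int.lt_floor_add_one x).le⟩]
  linarith

theorem isometry_of_bijOn_nonIntegers (hψ : LipschitzWith 1 ψ)
    (hbij : BijOn ψ nonIntegers nonIntegers) : Isometry ψ := by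
  set s : ℤ → ℝ := fun n => ψ (n + 1) - ψ n
  have hs_ge : ∀ n : ℤ, 1 ≤ |s n| := fun n => by
    obtain ⟨m, hm⟩ := exists_image_Ioo_eq_Ioo hψ.continuous hbij n
    simpa using hψ.le_abs_sub_of_Ioo_subset_image (lt_add_one (n : ℝ)) (by simp) hm.superset
  have hs : ∀ n, |s n| = 1 := fun n =>
    le_antisymm (by simpa using hψ.abs_sub_le (n + 1) n) (hs_ge n)
  have haff : ∀ n : ℤ, ∀ x ∈ Icc (n : ℝ) (n + 1), ψ x = ψ n + s n * (x - n) := fun n x hx => by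
    have := hψ.sub_mul_eq_of_le_abs_sub (by simpa using hs_ge n) hx
    rw [add_sub_cancel_left, mul_one] at this
    linarith
  have hper : Periodic s 1 := slope_succ_eq_of_injOn s haff hs hbij.injOn
  have hconst : ∀ n, s n = s 0 := fun n => by simpa using hper.int_mul_eq n
  have hlin := eq_add_mul_of_forall_mem_Icc fun n x hx => hconst n ▸ haff n x hx
  refine Isometry.of_dist_eq fun x y => ?_
  rw [Real.dist_eq, Real.dist_eq, hlin x, hlin y, add_sub_add_left_eq_sub, ← mul_sub, abs_mul,
    hs 0, one_mul]

end

theorem real_minus_integers_plastic :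
    Plastic {x : ℝ | ∀ k : ℤ, x ≠ k} := by
  intro φ hbij hφ x hx y hy
  obtain ⟨ψ, hψ, hφψ⟩ := (LipschitzOnWith.mk_one hφ).extend_real
  rw [hφψ hx, hφψ hy, (isometry_of_bijOn_nonIntegers hψ (hbij.congr hφψ)).dist_eq]
end

section
/- Let A = ⋃_{i∈ℤ} (a_i, b_i) ⊂ ℝ be a disjoint union of open intervals with b_i < a_{i+1} for all i, such that d(a_i, b_i) ≤ d(a_{i+1}, b_{i+1}) and d(b_{i-1}, a_i) ≤ d(b_i, a_{i+1}) for all i ∈ ℤ, and at least one of these inequalities is strict for some index. Then (A, d) with the Euclidean metric is not plastic. -/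
open Classical in
noncomputable def phiAux (a b : ℤ → ℝ) (x : ℝ) : ℝ :=
  if h : ∃ i, x ∈ Set.Ioo (a i) (b i) then
    a (h.choose - 1) + (x - a h.choose) *
      ((b (h.choose - 1) - a (h.choose - 1)) / (b h.choose - a h.choose))
  else x

theorem monotone_intervals_not_plastic (a b : ℤ → ℝ)
    (hab : ∀ i : ℤ, a i < b i) (hba : ∀ i : ℤ, b i < a (i + 1))
    (hlen : ∀ i : ℤ, b i - a i ≤ b (i + 1) - a (i + 1))
    (hgap : ∀ i : ℤ, a i - b (i - 1) ≤ a (i + 1) - b i)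
    (hstrict : ∃ j : ℤ, b j - a j < b (j + 1) - a (j + 1) ∨
                        a j - b (j - 1) < a (j + 1) - b j) :
    ¬ Plastic (⋃ i : ℤ, Set.Ioo (a i) (b i)) := by
  intro hpl
  have hLpos : ∀ i : ℤ, 0 < b i - a i := fun i => sub_pos.2 (hab i)
  have hsep : ∀ i j : ℤ, i < j → b i < a j := by
    intro i j hij
    have H : ∀ j, i + 1 ≤ j → b i < a j := by
      refine Int.le_induction ?_ ?_
      · exact hba i
      · intro n _ h
        exact h.trans ((hab n).trans (hba n))
    exact H j (by omega)
  have hmemu : ∀ (i j : ℤ) (x : ℝ), x ∈ Set.Ioo (a i) (b i) →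
      x ∈ Set.Ioo (a j) (b j) → i = j := by
    intro i j x hxi hxj
    by_contra h
    rcases lt_or_gt_of_ne h with h' | h'
    · have := hsep i j h'
      have := hxi.2; have := hxj.1; linarith
    · have := hsep j i h'
      have := hxi.1; have := hxj.2; linarith
  have hLmono : ∀ i j : ℤ, i ≤ j → b i - a i ≤ b j - a j := by
    intro i j hij
    have H : ∀ j, i ≤ j → b i - a i ≤ b j - a j := by
      refine Int.le_induction ?_ ?_
      · exact le_refl _
      · intro n _ h; exact h.trans (hlen n)
    exact H j hij
  have hkey : ∀ i j : ℤ, i < j → a (j - 1) - b (i - 1) ≤ a j - b i := by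
    intro i j hij
    have H : ∀ j, i + 1 ≤ j → a (j - 1) - b (i - 1) ≤ a j - b i := by
      refine Int.le_induction ?_ ?_
      · have h := hgap i
        have e : i + 1 - 1 = i := by ring
        rw [e]; linarith
      · intro n _ h
        have e : n + 1 - 1 = n := by ring
        rw [e]
        have h1 := hgap n
        have h2 := hlen (n - 1)
        have e2 : n - 1 + 1 = n := by ring
        rw [e2] at h2
        linarith
    exact H j (by omega)
  have hrpos : ∀ i : ℤ, 0 < (b (i - 1) - a (i - 1)) / (b i - a i) :=
    fun i => div_pos (hLpos _) (hLpos _)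
  have hrle : ∀ i : ℤ, (b (i - 1) - a (i - 1)) / (b i - a i) ≤ 1 := by
    intro i
    rw [div_le_one (hLpos i)]
    exact hLmono (i - 1) i (by omega)
  have hphi : ∀ (i : ℤ) (x : ℝ), x ∈ Set.Ioo (a i) (b i) →
      phiAux a b x = a (i - 1) + (x - a i) * ((b (i - 1) - a (i - 1)) / (b i - a i)) := by
    intro i x hx
    have hex : ∃ k, x ∈ Set.Ioo (a k) (b k) := ⟨i, hx⟩
    have hch : hex.choose = i := hmemu _ _ x hex.choose_spec hx
    unfold phiAux
    rw [dif_pos hex, hch]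
  have hphi' : ∀ (i : ℤ) (x : ℝ), x ∈ Set.Ioo (a i) (b i) →
      phiAux a b x = b (i - 1) - (b i - x) * ((b (i - 1) - a (i - 1)) / (b i - a i)) := by
    intro i x hx
    rw [hphi i x hx]
    have h0 : b i - a i ≠ 0 := ne_of_gt (hLpos i)
    field_simp
    ring
  have hmap : ∀ (i : ℤ) (x : ℝ), x ∈ Set.Ioo (a i) (b i) →
      phiAux a b x ∈ Set.Ioo (a (i - 1)) (b (i - 1)) := by
    intro i x hx
    rw [hphi i x hx]
    obtain ⟨hx1, hx2⟩ := hx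
    have h1 : 0 < b i - a i := hLpos i
    have h2 : 0 < b (i - 1) - a (i - 1) := hLpos (i - 1)
    constructor
    · have : 0 < (x - a i) * ((b (i - 1) - a (i - 1)) / (b i - a i)) :=
        mul_pos (by linarith) (hrpos i)
      linarith
    · have hlt : (x - a i) * ((b (i - 1) - a (i - 1)) / (b i - a i)) < b (i - 1) - a (i - 1) := by
        rw [mul_div_assoc'] at *
        rw [div_lt_iff₀ h1]
        nlinarith [mul_pos h2 (show (0:ℝ) < b i - x by linarith)]
      linarith
  have hcross : ∀ (i j : ℤ) (x y : ℝ), i < j → x ∈ Set.Ioo (a i) (b i) →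
      y ∈ Set.Ioo (a j) (b j) → phiAux a b y - phiAux a b x ≤ y - x := by
    intro i j x y hij hxi hyj
    rw [hphi j y hyj, hphi' i x hxi]
    have t1 : (y - a j) * ((b (j - 1) - a (j - 1)) / (b j - a j)) ≤ y - a j :=
      mul_le_of_le_one_right (by linarith [hyj.1]) (hrle j)
    have t2 : (b i - x) * ((b (i - 1) - a (i - 1)) / (b i - a i)) ≤ b i - x :=
      mul_le_of_le_one_right (by linarith [hxi.2]) (hrle i)
    have hk := hkey i j hij
    linarith
  have hmain : ∀ (i j : ℤ) (x y : ℝ), i < j → x ∈ Set.Ioo (a i) (b i) →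
      y ∈ Set.Ioo (a j) (b j) →
      dist (phiAux a b x) (phiAux a b y) ≤ dist x y := by
    intro i j x y hij hxi hyj
    have hxy : x < y := by
      have := hsep i j hij
      have := hxi.2; have := hyj.1; linarith
    have hfx := hmap i x hxi
    have hfy := hmap j y hyj
    have hfxy : phiAux a b x < phiAux a b y := by
      have := hsep (i - 1) (j - 1) (by omega)
      have := hfx.2; have := hfy.1; linarith
    rw [Real.dist_eq, Real.dist_eq,
      abs_of_neg (show phiAux a b x - phiAux a b y < 0 by linarith),
      abs_of_neg (show x - y < 0 by linarith)]
    have := hcross i j x y hij hxi hyj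
    linarith
  have hne : NonexpOn (phiAux a b) (⋃ i : ℤ, Set.Ioo (a i) (b i)) := by
    intro x hx y hy
    rw [Set.mem_iUnion] at hx hy
    obtain ⟨i, hxi⟩ := hx
    obtain ⟨j, hyj⟩ := hy
    rcases lt_trichotomy i j with h | h | h
    · exact hmain i j x y h hxi hyj
    · subst h
      rw [hphi i x hxi, hphi i y hyj, Real.dist_eq, Real.dist_eq]
      have e : (a (i - 1) + (x - a i) * ((b (i - 1) - a (i - 1)) / (b i - a i))) -
          (a (i - 1) + (y - a i) * ((b (i - 1) - a (i - 1)) / (b i - a i))) =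
          (x - y) * ((b (i - 1) - a (i - 1)) / (b i - a i)) := by ring
      rw [e, abs_mul, abs_of_nonneg (le_of_lt (hrpos i))]
      exact mul_le_of_le_one_right (abs_nonneg _) (hrle i)
    · rw [dist_comm, dist_comm x y]
      exact hmain j i y x h hyj hxi
  have hbij : Set.BijOn (phiAux a b) (⋃ i : ℤ, Set.Ioo (a i) (b i))
      (⋃ i : ℤ, Set.Ioo (a i) (b i)) := by
    refine ⟨?_, ?_, ?_⟩
    · intro x hx
      rw [Set.mem_iUnion] at hx ⊢
      obtain ⟨i, hi⟩ := hx
      exact ⟨i - 1, hmap i x hi⟩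
    · intro x hx y hy hxy
      rw [Set.mem_iUnion] at hx hy
      obtain ⟨i, hxi⟩ := hx
      obtain ⟨j, hyj⟩ := hy
      have h1 := hmap i x hxi
      have h2 := hmap j y hyj
      rw [hxy] at h1
      have hij : i = j := by
        have := hmemu _ _ _ h1 h2; omega
      subst hij
      have e := hxy
      rw [hphi i x hxi, hphi i y hyj] at e
      have hr : (b (i - 1) - a (i - 1)) / (b i - a i) ≠ 0 := ne_of_gt (hrpos i)
      have e2 : (x - a i) * ((b (i - 1) - a (i - 1)) / (b i - a i)) =
          (y - a i) * ((b (i - 1) - a (i - 1)) / (b i - a i)) := by linarith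
      have := mul_right_cancel₀ hr e2
      linarith
    · intro y hy
      rw [Set.mem_iUnion] at hy
      obtain ⟨k, hk⟩ := hy
      have hDk : (0:ℝ) < b k - a k := hLpos k
      have hDk1 : (0:ℝ) < b (k + 1) - a (k + 1) := hLpos (k + 1)
      set x := a (k + 1) + (y - a k) * ((b (k + 1) - a (k + 1)) / (b k - a k)) with hxdef
      have hxmem : x ∈ Set.Ioo (a (k + 1)) (b (k + 1)) := by
        constructor
        · have : 0 < (y - a k) * ((b (k + 1) - a (k + 1)) / (b k - a k)) :=
            mul_pos (by linarith [hk.1]) (div_pos hDk1 hDk)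
          rw [hxdef]; linarith
        · have hlt : (y - a k) * ((b (k + 1) - a (k + 1)) / (b k - a k)) <
              b (k + 1) - a (k + 1) := by
            rw [mul_div_assoc', div_lt_iff₀ hDk]
            nlinarith [mul_pos hDk1 (show (0:ℝ) < b k - y by linarith [hk.2])]
          rw [hxdef]; linarith
      refine ⟨x, Set.mem_iUnion.2 ⟨k + 1, hxmem⟩, ?_⟩
      rw [hphi (k + 1) x hxmem]
      have e : k + 1 - 1 = k := by ring
      rw [e, hxdef]
      have h1 : b k - a k ≠ 0 := ne_of_gt hDk
      have h2 : b (k + 1) - a (k + 1) ≠ 0 := ne_of_gt hDk1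
      field_simp
      ring
  have hiso := hpl (phiAux a b) hbij hne
  obtain ⟨j, hj | hj⟩ := hstrict
  · -- lengths strictly increase from j to j+1
    set x := (2 * a (j + 1) + b (j + 1)) / 3 with hxdef
    set y := (a (j + 1) + 2 * b (j + 1)) / 3 with hydef
    have hD : (0:ℝ) < b (j + 1) - a (j + 1) := hLpos (j + 1)
    have hxmem : x ∈ Set.Ioo (a (j + 1)) (b (j + 1)) := by
      constructor <;> (rw [hxdef]; linarith)
    have hymem : y ∈ Set.Ioo (a (j + 1)) (b (j + 1)) := by
      constructor <;> (rw [hydef]; linarith)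
    have h1 := hiso x (Set.mem_iUnion.2 ⟨j + 1, hxmem⟩) y (Set.mem_iUnion.2 ⟨j + 1, hymem⟩)
    have e : j + 1 - 1 = j := by ring
    have hD0 : b (j + 1) - a (j + 1) ≠ 0 := ne_of_gt hD
    have efx : phiAux a b x - phiAux a b y = -((b j - a j) / 3) := by
      rw [hphi (j + 1) x hxmem, hphi (j + 1) y hymem, e, hxdef, hydef]
      field_simp
      ring
    have efxy : dist (phiAux a b x) (phiAux a b y) = (b j - a j) / 3 := by
      rw [Real.dist_eq, efx, abs_neg, abs_of_pos (by linarith [hLpos j])]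
    have exy : dist x y = (b (j + 1) - a (j + 1)) / 3 := by
      rw [Real.dist_eq, hxdef, hydef,
        abs_of_neg (show (2 * a (j+1) + b (j+1)) / 3 - (a (j+1) + 2 * b (j+1)) / 3 < 0 by linarith)]
      ring
    rw [efxy, exy] at h1
    linarith
  · -- gaps strictly increase from j to j+1
    set x := (a j + b j) / 2 with hxdef
    set y := (a (j + 1) + b (j + 1)) / 2 with hydef
    have hDj : (0:ℝ) < b j - a j := hLpos j
    have hDj1 : (0:ℝ) < b (j + 1) - a (j + 1) := hLpos (j + 1)
    have hxmem : x ∈ Set.Ioo (a j) (b j) := by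
      constructor <;> (rw [hxdef]; linarith)
    have hymem : y ∈ Set.Ioo (a (j + 1)) (b (j + 1)) := by
      constructor <;> (rw [hydef]; linarith)
    have h1 := hiso x (Set.mem_iUnion.2 ⟨j, hxmem⟩) y (Set.mem_iUnion.2 ⟨j + 1, hymem⟩)
    have e : j + 1 - 1 = j := by ring
    have efx : phiAux a b x = a (j - 1) + (b (j - 1) - a (j - 1)) / 2 := by
      rw [hphi j x hxmem, hxdef]
      have h0 : b j - a j ≠ 0 := ne_of_gt hDj
      field_simp
      ring
    have efy : phiAux a b y = a j + (b j - a j) / 2 := by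
      rw [hphi (j + 1) y hymem, e, hydef]
      have h0 : b (j + 1) - a (j + 1) ≠ 0 := ne_of_gt hDj1
      field_simp
      ring
    have hD1 : (0:ℝ) < b (j - 1) - a (j - 1) := hLpos (j - 1)
    have hsep1 : b (j - 1) < a j := by
      have := hba (j - 1)
      have e2 : j - 1 + 1 = j := by ring
      rwa [e2] at this
    have hfxy : phiAux a b x < phiAux a b y := by
      rw [efx, efy]; linarith
    have hxy : x < y := by
      rw [hxdef, hydef]; linarith [hba j]
    rw [Real.dist_eq, Real.dist_eq,
      abs_of_neg (show phiAux a b x - phiAux a b y < 0 by linarith),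
      abs_of_neg (show x - y < 0 by linarith)] at h1
    rw [efx, efy, hxdef, hydef] at h1
    have hL := hLmono (j - 1) (j + 1) (by omega)
    linarith
end

section
/- Let A = ⋃_{i∈ℤ} [a_i, b_i) ⊂ ℝ be a disjoint union of half-open intervals of equal length with equal gaps (d(a_i, b_i) = L > 0 and d(b_i, a_{i+1}) = g > 0 for all i ∈ ℤ, b_i < a_{i+1}). Then (A, d) with the Euclidean metric is not plastic. -/
/-!
Let `[p, q)` be one of the intervals and `c` the period, so that the next interval is
`[p + c, q + c)` and `A` misses `[q, p + c)`. Squeeze `[p, q)` and `[p + c, q + c)` by the factor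
`1/2` onto the two halves of `[p, q)`, shift everything from `q + c` on back by one period, and fix
everything below `p`. On `A` this map is increasing and its displacement `x ↦ φ x - x` is
decreasing, so it is non-expansive; by periodicity it is a bijection of `A`, yet it halves
distances inside `[p, q)`.
-/

open Set

theorem nonexpOn_of_monotoneOn_of_antitoneOn_sub {φ : ℝ → ℝ} {A : Set ℝ}
    (hmono : MonotoneOn φ A) (hdisp : AntitoneOn (fun x => φ x - x) A) : NonexpOn φ A := by
  have key : ∀ x ∈ A, ∀ y ∈ A, x ≤ y → dist (φ x) (φ y) ≤ dist x y := by
    intro x hx y hy hxy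
    have h₁ := hmono hx hy hxy
    have h₂ := hdisp hx hy hxy
    rw [Real.dist_eq, Real.dist_eq, abs_of_nonpos (by linarith), abs_of_nonpos (by linarith)]
    linarith
  intro x hx y hy
  rcases le_total x y with h | h
  · exact key x hx y hy h
  · rw [dist_comm, dist_comm x]
    exact key y hy x hx h

noncomputable def squeezeMap (p q c x : ℝ) : ℝ :=
  if x < p then x
  else if x < q then (x + p) / 2
  else if x < q + c then (x + q - c) / 2
  else x - c

section squeezeMap

variable {p q c : ℝ}

theorem squeezeMap_strictMonoOn (hqc : q ≤ p + c) :
    StrictMonoOn (squeezeMap p q c) (Iio q ∪ Ici (p + c)) := by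
  rintro x hx y hy hxy
  simp only [mem_union, mem_Iio, mem_Ici] at hx hy
  unfold squeezeMap
  rcases hx with hx | hx <;> rcases hy with hy | hy <;> split_ifs <;> linarith

theorem squeezeMap_sub_antitone (hpq : p ≤ q) (hqc : q ≤ p + c) :
    Antitone (fun x => squeezeMap p q c x - x) := by
  intro x y hxy
  dsimp only
  unfold squeezeMap
  split_ifs <;> linarith

variable {A : Set ℝ} (hper : ∀ x, x + c ∈ A ↔ x ∈ A) (hIco : Ico p q ⊆ A)
  (hsplit : A ⊆ Iio q ∪ Ici (p + c))
include hper hIco hsplit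

theorem squeezeMap_mapsTo : MapsTo (squeezeMap p q c) A A := by
  intro x hx
  have hx' := hsplit hx
  simp only [mem_union, mem_Iio, mem_Ici] at hx'
  unfold squeezeMap
  split_ifs with h₁ h₂ h₃
  · exact hx
  · exact hIco ⟨by linarith, by linarith⟩
  · exact hIco ⟨by rcases hx' <;> linarith, by linarith⟩
  · exact (hper _).1 (by rwa [sub_add_cancel])

theorem squeezeMap_surjOn (hpq : p ≤ q) (hqc : q ≤ p + c) : SurjOn (squeezeMap p q c) A A := by
  intro y hy
  have hy' := hsplit hy
  simp only [mem_union, mem_Iio, mem_Ici] at hy'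
  by_cases h₁ : y < p
  · exact ⟨y, hy, if_pos h₁⟩
  by_cases h₂ : y < (p + q) / 2
  · refine ⟨2 * y - p, hIco ⟨by linarith, by linarith⟩, ?_⟩
    unfold squeezeMap
    rw [if_neg (by linarith), if_pos (by linarith)]
    ring
  rcases hy' with h₃ | h₃
  · refine ⟨2 * y - q + c, (hper _).2 (hIco ⟨by linarith, by linarith⟩), ?_⟩
    unfold squeezeMap
    rw [if_neg (by linarith), if_neg (by linarith), if_pos (by linarith)]
    ring
  · refine ⟨y + c, (hper _).2 hy, ?_⟩
    unfold squeezeMap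
    rw [if_neg (by linarith), if_neg (by linarith), if_neg (by linarith)]
    ring

theorem not_plastic_of_periodic (hpq : p < q) (hqc : q ≤ p + c) : ¬ Plastic A := by
  intro hA
  have hbij : BijOn (squeezeMap p q c) A A :=
    ⟨squeezeMap_mapsTo hper hIco hsplit,
      ((squeezeMap_strictMonoOn hqc).mono hsplit).injOn,
      squeezeMap_surjOn hper hIco hsplit hpq.le hqc⟩
  have hnonexp : NonexpOn (squeezeMap p q c) A :=
    nonexpOn_of_monotoneOn_of_antitoneOn_sub
      ((squeezeMap_strictMonoOn hqc).mono hsplit).monotoneOn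
      ((squeezeMap_sub_antitone hpq.le hqc).antitoneOn A)
  have hp : p ∈ A := hIco ⟨le_rfl, hpq⟩
  have hm : (p + q) / 2 ∈ A := hIco ⟨by linarith, by linarith⟩
  have hisom := hA _ hbij hnonexp p hp _ hm
  unfold squeezeMap at hisom
  rw [if_neg (lt_irrefl p), if_pos hpq, if_neg (by linarith), if_pos (by linarith),
    Real.dist_eq, Real.dist_eq, abs_of_nonpos (by linarith), abs_of_nonpos (by linarith)] at hisom
  linarith

end squeezeMap

theorem mem_iUnion_Ico_add_iff {a b : ℤ → ℝ} {c : ℝ} (ha : ∀ i, a (i + 1) = a i + c)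
    (hb : ∀ i, b (i + 1) = b i + c) (x : ℝ) :
    x + c ∈ ⋃ i, Ico (a i) (b i) ↔ x ∈ ⋃ i, Ico (a i) (b i) := by
  have shift : ∀ i, x + c ∈ Ico (a (i + 1)) (b (i + 1)) ↔ x ∈ Ico (a i) (b i) := by
    intro i
    simp only [mem_Ico, ha, hb, add_le_add_iff_right, add_lt_add_iff_right]
  simp only [mem_iUnion]
  constructor
  · rintro ⟨j, hj⟩
    exact ⟨j - 1, (shift _).1 (by rwa [sub_add_cancel])⟩
  · rintro ⟨i, hi⟩
    exact ⟨i + 1, (shift i).2 hi⟩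

theorem iUnion_Ico_subset_of_monotone {a b : ℤ → ℝ} (ha : Monotone a) (hb : Monotone b)
    (k : ℤ) : ⋃ i, Ico (a i) (b i) ⊆ Iio (b k) ∪ Ici (a (k + 1)) := by
  refine iUnion_subset fun i x hx => ?_
  rcases le_or_gt i k with hi | hi
  · exact Or.inl (hx.2.trans_le (hb hi))
  · exact Or.inr ((ha (Int.add_one_le_of_lt hi)).trans hx.1)

theorem equal_halfopen_intervals_not_plastic_general (a b : ℤ → ℝ) (L g : ℝ)
    (hL : 0 < L) (hg : 0 < g)
    (hlen : ∀ i : ℤ, b i - a i = L)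
    (hgap : ∀ i : ℤ, a (i + 1) - b i = g) :
    ¬ Plastic (⋃ i : ℤ, Set.Ico (a i) (b i)) := by
  have ha : ∀ i, a (i + 1) = a i + (L + g) := fun i => by linarith [hlen i, hgap i]
  have hb : ∀ i, b (i + 1) = b i + (L + g) := fun i => by
    linarith [hlen i, hlen (i + 1), hgap i]
  have hmono_a : Monotone a := monotone_int_of_le_succ fun i => by linarith [ha i]
  have hmono_b : Monotone b := monotone_int_of_le_succ fun i => by linarith [hb i]
  have hsplit := iUnion_Ico_subset_of_monotone hmono_a hmono_b 0
  rw [ha 0] at hsplit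
  exact not_plastic_of_periodic (mem_iUnion_Ico_add_iff ha hb)
    (subset_iUnion (fun i => Ico (a i) (b i)) 0) hsplit (by linarith [hlen 0])
    (by linarith [hlen 0])

theorem equal_halfopen_intervals_not_plastic (a b : ℤ → ℝ) (L g : ℝ)
    (hL : 0 < L) (hg : 0 < g)
    (hba : ∀ i : ℤ, b i < a (i + 1))
    (hlen : ∀ i : ℤ, b i - a i = L)
    (hgap : ∀ i : ℤ, a (i + 1) - b i = g) :
    ¬ Plastic (⋃ i : ℤ, Set.Ico (a i) (b i)) :=
  equal_halfopen_intervals_not_plastic_general a b L g hL hg hlen hgap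
end

section
/- Let A ⊂ ℝ be bounded below and without accumulation points, with minimum a, let φ : A → A be a non-expansive bijection, let b ∈ A satisfy φ(b) = a, and let c ∈ A with c ≤ b. Then φⁿ(c) ≤ b for every n ∈ ℕ. -/
theorem trapped_orbit (A : Set ℝ) (hbdd : BddBelow A)
    (hacc : ∀ x : ℝ, ¬ AccPt x (Filter.principal A))
    (a : ℝ) (ha : IsLeast A a)
    (φ : ℝ → ℝ) (hbij : Set.BijOn φ A A) (hne : NonexpOn φ A)
    (b : ℝ) (hb : b ∈ A) (hφb : φ b = a)
    (c : ℝ) (hc : c ∈ A) (hcb : c ≤ b) :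
    ∀ n : ℕ, φ^[n] c ≤ b := by
  have key : ∀ n : ℕ, φ^[n] c ∈ A ∧ φ^[n] c ≤ b := by
    intro n
    induction n with
    | zero => exact ⟨hc, hcb⟩
    | succ n ih =>
      obtain ⟨hmem, hle⟩ := ih
      rw [Function.iterate_succ_apply']
      refine ⟨hbij.mapsTo hmem, ?_⟩
      have h := hne _ hmem _ hb
      rw [hφb, Real.dist_eq, Real.dist_eq] at h
      have hax : a ≤ φ^[n] c := ha.2 hmem
      have h2 : |φ^[n] c - b| = b - φ^[n] c := by
        rw [abs_of_nonpos (by linarith)]; ring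
      rw [h2] at h
      have h3 : φ (φ^[n] c) - a ≤ b - φ^[n] c := le_trans (le_abs_self _) h
      linarith
  exact fun n => (key n).2
end

section
/- Let A ⊂ ℝ be a set of the form A = ⋃_{i ≤ n} [a_i, b_i] ∪ ⋃_{i > n} (a_i, b_i] (indexed over i ∈ ℤ, with b_i < a_{i+1}), where all intervals have the same length and all gaps have the same length. Then (A, d) with the Euclidean metric is not plastic. -/
/-!
Let `[α, β] = [a n, b n]` be the last closed interval and `(γ, δ] = (a (n+1), b (n+1)]` the
first half-open one, and `m` the midpoint of `[α, β]`. Fix every point of `A` left of `α`, halve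
`(α, β]` onto `(α, m]`, map `(γ, δ]` affinely onto `(m, β]` (this uses that the two intervals have
the same length) and translate the rest of `A` one period to the left (this uses periodicity of
`A` to the right of `β`). The resulting map `φ` is a bijection of `A`, and both `φ` and
`x ↦ x - φ x` are increasing on `A`, so `φ` is non-expansive; but it halves distances in `(α, β]`.
-/

open Set

theorem nonexpOn_of_monotoneOn_of_monotoneOn_sub {φ : ℝ → ℝ} {A : Set ℝ}
    (hφ : MonotoneOn φ A) (hsub : MonotoneOn (fun x => x - φ x) A) : NonexpOn φ A := by
  have key : ∀ x ∈ A, ∀ y ∈ A, x ≤ y → dist (φ x) (φ y) ≤ dist x y := by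
    intro x hx y hy hxy
    have h₁ := hφ hx hy hxy
    have h₂ := hsub hx hy hxy
    rw [Real.dist_eq, Real.dist_eq, abs_of_nonpos (by linarith), abs_of_nonpos (by linarith)]
    linarith
  intro x hx y hy
  rcases le_total x y with hxy | hyx
  · exact key x hx y hy hxy
  · rw [dist_comm, dist_comm x]
    exact key y hy x hx hyx

noncomputable def seamMap (α β δ x : ℝ) : ℝ :=
  if x ≤ α then x
  else if x ≤ β then (x + α) / 2
  else if x ≤ δ then (x + 2 * β - δ) / 2
  else x - (δ - β)

section seamMap

variable {A : Set ℝ} {α β γ δ : ℝ}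

theorem seamMap_of_mem_Ioc {x : ℝ} (hx : x ∈ Ioc α β) : seamMap α β δ x = (x + α) / 2 := by
  simp [seamMap, not_le.2 hx.1, hx.2]

theorem monotone_sub_seamMap (hαβ : α ≤ β) (hβδ : β - α ≤ δ - β) :
    Monotone fun x => x - seamMap α β δ x := by
  intro x y hxy
  simp only [seamMap]
  split_ifs <;> linarith

theorem seamMap_strictMonoOn (hlen : δ - γ = β - α) (hgap : ∀ y ∈ A, β < y → γ < y) :
    StrictMonoOn (seamMap α β δ) A := by
  intro x _ y hy hxy
  simp only [seamMap]
  rcases le_or_gt y β with hyβ | hyβ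
  · split_ifs <;> linarith
  · have := hgap y hy hyβ
    split_ifs <;> linarith

theorem seamMap_mapsTo (hlen : δ - γ = β - α) (hleft : Ioc α β ⊆ A)
    (hgap : ∀ y ∈ A, β < y → γ < y) (hshift : ∀ x, β < x → (x + (δ - β) ∈ A ↔ x ∈ A)) :
    MapsTo (seamMap α β δ) A A := by
  intro x hx
  simp only [seamMap]
  split_ifs with h₁ h₂ h₃
  · exact hx
  · exact hleft ⟨by linarith, by linarith⟩
  · exact hleft ⟨by linarith [hgap x hx (not_le.1 h₂)], by linarith⟩
  · simpa using (hshift (x - (δ - β)) (by linarith)).1 (by simpa using hx)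

theorem seamMap_surjOn (hαβ : α < β) (hβγ : β < γ) (hlen : δ - γ = β - α)
    (hleft : Ioc α β ⊆ A) (hright : Ioc γ δ ⊆ A)
    (hshift : ∀ x, β < x → (x + (δ - β) ∈ A ↔ x ∈ A)) : SurjOn (seamMap α β δ) A A := by
  intro y hy
  rcases le_or_gt y α with hyα | hαy
  · exact ⟨y, hy, if_pos hyα⟩
  rcases le_or_gt y ((α + β) / 2) with hym | hmy
  · refine ⟨2 * y - α, hleft ⟨by linarith, by linarith⟩, ?_⟩
    simp only [seamMap]
    split_ifs <;> linarith
  rcases le_or_gt y β with hyβ | hβy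
  · refine ⟨2 * y - 2 * β + δ, hright ⟨by linarith, by linarith⟩, ?_⟩
    simp only [seamMap]
    split_ifs <;> linarith
  · refine ⟨y + (δ - β), (hshift y hβy).2 hy, ?_⟩
    simp only [seamMap]
    split_ifs <;> linarith

end seamMap

theorem not_plastic_of_inter_Ioc_eq {A : Set ℝ} {α β γ δ : ℝ} (hαβ : α < β) (hβγ : β < γ)
    (hlen : δ - γ = β - α) (hmid : A ∩ Ioc α δ = Ioc α β ∪ Ioc γ δ)
    (hshift : ∀ x, β < x → (x + (δ - β) ∈ A ↔ x ∈ A)) : ¬ Plastic A := by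
  have hleft : Ioc α β ⊆ A := fun x hx => (hmid.symm.subset (Or.inl hx)).1
  have hright : Ioc γ δ ⊆ A := fun x hx => (hmid.symm.subset (Or.inr hx)).1
  have hgap : ∀ y ∈ A, β < y → γ < y := by
    intro y hy hβy
    rcases le_or_gt y δ with hyδ | hδy
    · rcases hmid.subset ⟨hy, by linarith, hyδ⟩ with h | h
      · exact absurd h.2 hβy.not_ge
      · exact h.1
    · linarith
  have hmono := seamMap_strictMonoOn hlen hgap
  have hbij : BijOn (seamMap α β δ) A A := ⟨seamMap_mapsTo hlen hleft hgap hshift,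
    hmono.injOn, seamMap_surjOn hαβ hβγ hlen hleft hright hshift⟩
  have hnonexp : NonexpOn (seamMap α β δ) A := nonexpOn_of_monotoneOn_of_monotoneOn_sub
    hmono.monotoneOn ((monotone_sub_seamMap hαβ.le (by linarith)).monotoneOn A)
  have hm : (α + β) / 2 ∈ Ioc α β := ⟨by linarith, by linarith⟩
  have hβ : β ∈ Ioc α β := ⟨hαβ, le_rfl⟩
  intro hplastic
  have hiso := hplastic _ hbij hnonexp _ (hleft hm) _ (hleft hβ)
  rw [seamMap_of_mem_Ioc hm, seamMap_of_mem_Ioc hβ, Real.dist_eq, Real.dist_eq,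
    abs_of_neg (by linarith), abs_of_neg (by linarith)] at hiso
  linarith

theorem Function.Periodic.int_eq {α : Type*} {f : ℤ → α} (h : Function.Periodic f 1) (i j : ℤ) :
    f i = f j := by
  simpa using (h.int_mul_eq i).trans (h.int_mul_eq j).symm

theorem exists_add_one_eq_add_of_periodic {a b : ℤ → ℝ}
    (hlen : ∀ i : ℤ, b i - a i = b (i + 1) - a (i + 1))
    (hgap : ∀ i : ℤ, a (i + 1) - b i = a i - b (i - 1)) :
    ∃ p : ℝ, ∀ i : ℤ, a (i + 1) = a i + p ∧ b (i + 1) = b i + p := by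
  have hlen' : Function.Periodic (fun i => b i - a i) 1 := fun i => (hlen i).symm
  have hgap' : Function.Periodic (fun i => a (i + 1) - b i) 1 := fun i => by
    simpa using hgap (i + 1)
  have hℓ : ∀ i, b i - a i = b 0 - a 0 := (hlen'.int_eq · 0)
  have hg : ∀ i, a (i + 1) - b i = a 1 - b 0 := (hgap'.int_eq · 0)
  refine ⟨(b 0 - a 0) + (a 1 - b 0), fun i => ⟨?_, ?_⟩⟩
  · linarith [hℓ i, hg i]
  · linarith [hℓ (i + 1), hg i]

def mixedUnion (a b : ℤ → ℝ) (n : ℤ) : Set ℝ :=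
  (⋃ i : {i : ℤ // i ≤ n}, Icc (a i) (b i)) ∪ (⋃ i : {i : ℤ // n < i}, Ioc (a i) (b i))

section mixedUnion

variable {a b : ℤ → ℝ} {n : ℤ} {x : ℝ}

theorem mem_mixedUnion :
    x ∈ mixedUnion a b n ↔ (∃ i ≤ n, x ∈ Icc (a i) (b i)) ∨ ∃ i, n < i ∧ x ∈ Ioc (a i) (b i) := by
  simp only [mixedUnion, mem_union, mem_iUnion, Subtype.exists, exists_prop]

theorem mixedUnion_inter_Ioc (ha : Monotone a) (hb : Monotone b) :
    mixedUnion a b n ∩ Ioc (a n) (b (n + 1)) = Ioc (a n) (b n) ∪ Ioc (a (n + 1)) (b (n + 1)) := by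
  ext x
  simp only [mem_inter_iff, mem_union, mem_mixedUnion]
  constructor
  · rintro ⟨⟨i, hi, hx⟩ | ⟨i, hi, hx⟩, hxn⟩
    · exact Or.inl ⟨hxn.1, hx.2.trans (hb hi)⟩
    · exact Or.inr ⟨(ha (Int.add_one_le_of_lt hi)).trans_lt hx.1, hxn.2⟩
  · rintro (hx | hx)
    · exact ⟨Or.inl ⟨n, le_rfl, hx.1.le, hx.2⟩, hx.1, hx.2.trans (hb (Int.le_add_one le_rfl))⟩
    · exact ⟨Or.inr ⟨n + 1, Int.lt_add_one_iff.2 le_rfl, hx⟩,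
        (ha (Int.le_add_one le_rfl)).trans_lt hx.1, hx.2⟩

theorem mem_mixedUnion_iff_of_lt (hb : Monotone b) (hx : b n < x) :
    x ∈ mixedUnion a b n ↔ ∃ i, x ∈ Ioc (a i) (b i) := by
  rw [mem_mixedUnion]
  constructor
  · rintro (⟨i, hi, hxi⟩ | ⟨i, -, hxi⟩)
    · exact absurd (hxi.2.trans (hb hi)) hx.not_ge
    · exact ⟨i, hxi⟩
  · rintro ⟨i, hxi⟩
    refine Or.inr ⟨i, lt_of_not_ge fun hi => ?_, hxi⟩
    exact absurd (hxi.2.trans (hb hi)) hx.not_ge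

theorem add_mem_mixedUnion_iff {p : ℝ} (hb : Monotone b) (hap : ∀ i, a (i + 1) = a i + p)
    (hbp : ∀ i, b (i + 1) = b i + p) (hx : b n < x) :
    x + p ∈ mixedUnion a b n ↔ x ∈ mixedUnion a b n := by
  have hp : 0 ≤ p := by linarith [hb (Int.le_add_one le_rfl : n ≤ n + 1), hbp n]
  have hshift : ∀ i, x + p ∈ Ioc (a (i + 1)) (b (i + 1)) ↔ x ∈ Ioc (a i) (b i) := by
    simp [hap, hbp]
  rw [mem_mixedUnion_iff_of_lt hb (by linarith), mem_mixedUnion_iff_of_lt hb hx]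
  constructor
  · rintro ⟨i, hi⟩
    exact ⟨i - 1, (hshift _).1 (by simpa using hi)⟩
  · rintro ⟨i, hi⟩
    exact ⟨i + 1, (hshift i).2 hi⟩

end mixedUnion

theorem mixed_closed_halfopen_not_plastic (a b : ℤ → ℝ) (n : ℤ)
    (hab : ∀ i : ℤ, a i < b i) (hba : ∀ i : ℤ, b i < a (i + 1))
    (hlen : ∀ i : ℤ, b i - a i = b (i + 1) - a (i + 1))
    (hgap : ∀ i : ℤ, a (i + 1) - b i = a i - b (i - 1)) :
    ¬ Plastic ((⋃ i : {i : ℤ // i ≤ n}, Set.Icc (a i) (b i)) ∪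
               (⋃ i : {i : ℤ // n < i}, Set.Ioc (a i) (b i))) := by
  obtain ⟨p, hp⟩ := exists_add_one_eq_add_of_periodic hlen hgap
  have ha : Monotone a := (strictMono_int_of_lt_succ fun i => (hab i).trans (hba i)).monotone
  have hb : Monotone b := (strictMono_int_of_lt_succ fun i => (hba i).trans (hab (i + 1))).monotone
  have hperiod : b (n + 1) - b n = p := by linarith [(hp n).2]
  refine not_plastic_of_inter_Ioc_eq (hab n) (hba n) (hlen n).symm (mixedUnion_inter_Ioc ha hb)
    fun x hx => ?_
  rw [hperiod]
  exact add_mem_mixedUnion_iff hb (fun i => (hp i).1) (fun i => (hp i).2) hx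
end
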